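/- arXiv:2401.10990 — 4 statements merged into one kernel-verified Lean document; each statement's English description precedes it below -/
import Mathlib

section
/- Let h : ℝ^n → ℝ^n be globally Lipschitz with constant γ ≥ 0 (with respect to the Euclidean norm). Then there exist functions h_ij : ℝ^n × ℝ^n → ℝ, for 1 ≤ i, j ≤ n, such that |h_ij(Ψ, Φ)| ≤ γ for all Ψ, Φ ∈ ℝ^n, and for all Ψ, Φ ∈ ℝ^n and each component index i, one has h(Ψ)_i − h(Φ)_i = Σ_{j=1}^{n} h_ij(Ψ, Φ) · (Ψ_j − Φ_j); equivalently, h(Ψ) − h(Φ) = Σ_{i,j=1}^{n} h_ij(Ψ, Φ) · ℋ_ij (Ψ − Φ), where ℋ_ij = e_n(i) e_n(j)ᵀ. -/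
/-!
Walk from `Φ` to `Ψ` changing one coordinate at a time: the `j`-th step changes only the
`j`-th coordinate, by `Ψ j - Φ j`, so the change of `h i` along it is at most
`γ |Ψ j - Φ j|`. Take `H i j Ψ Φ` to be that change divided by `Ψ j - Φ j`; the telescoping
sum of the steps is `h Ψ i - h Φ i`. When `Ψ j = Φ j` the step is trivial and the quotient
is `0` by the convention `x / 0 = 0`.
-/

namespace EuclideanSpace

variable {n : ℕ}

noncomputable def mixPrefix (Ψ Φ : EuclideanSpace ℝ (Fin n)) (k : ℕ) :
    EuclideanSpace ℝ (Fin n) :=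
  WithLp.toLp 2 fun t => if (t : ℕ) < k then Ψ t else Φ t

variable (Ψ Φ : EuclideanSpace ℝ (Fin n))

@[simp]
lemma mixPrefix_zero : mixPrefix Ψ Φ 0 = Φ := by
  ext t; simp [mixPrefix]

@[simp]
lemma mixPrefix_self_dim : mixPrefix Ψ Φ n = Ψ := by
  ext t; simp [mixPrefix]

lemma mixPrefix_succ_sub (j : Fin n) :
    mixPrefix Ψ Φ (j + 1) - mixPrefix Ψ Φ j = single j (Ψ j - Φ j) := by
  ext t
  rcases eq_or_ne t j with rfl | htj
  · simp [mixPrefix]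
  · have hlt : (t : ℕ) < j + 1 ↔ (t : ℕ) < j := by have := Fin.val_ne_of_ne htj; omega
    simp only [mixPrefix, PiLp.sub_apply, PiLp.single_apply, if_neg htj, hlt,
      sub_self]

lemma sub_eq_sum_mixPrefix {M : Type*} [AddCommGroup M] (f : EuclideanSpace ℝ (Fin n) → M) :
    f Ψ - f Φ = ∑ j : Fin n, (f (mixPrefix Ψ Φ (j + 1)) - f (mixPrefix Ψ Φ j)) := by
  rw [Fin.sum_univ_eq_sum_range (fun k => f (mixPrefix Ψ Φ (k + 1)) - f (mixPrefix Ψ Φ k)),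
    Finset.sum_range_sub (fun k => f (mixPrefix Ψ Φ k)), mixPrefix_self_dim, mixPrefix_zero]

lemma abs_apply_mixPrefix_step_le {γ : ℝ}
    {h : EuclideanSpace ℝ (Fin n) → EuclideanSpace ℝ (Fin n)}
    (hLip : ∀ u v, ‖h u - h v‖ ≤ γ * ‖u - v‖) (i j : Fin n) :
    |h (mixPrefix Ψ Φ (j + 1)) i - h (mixPrefix Ψ Φ j) i| ≤ γ * |Ψ j - Φ j| :=
  calc |h (mixPrefix Ψ Φ (j + 1)) i - h (mixPrefix Ψ Φ j) i|
      = ‖(h (mixPrefix Ψ Φ (j + 1)) - h (mixPrefix Ψ Φ j)) i‖ := rfl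
    _ ≤ ‖h (mixPrefix Ψ Φ (j + 1)) - h (mixPrefix Ψ Φ j)‖ := PiLp.norm_apply_le _ i
    _ ≤ γ * ‖mixPrefix Ψ Φ (j + 1) - mixPrefix Ψ Φ j‖ := hLip _ _
    _ = γ * |Ψ j - Φ j| := by rw [mixPrefix_succ_sub, PiLp.norm_single, Real.norm_eq_abs]

end EuclideanSpace

lemma abs_div_le_of_abs_le_mul_abs {a b γ : ℝ} (hγ : 0 ≤ γ) (h : |a| ≤ γ * |b|) :
    |a / b| ≤ γ := by
  rcases eq_or_ne b 0 with rfl | hb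
  · simpa using hγ
  · rwa [abs_div, div_le_iff₀ (abs_pos.mpr hb)]

open EuclideanSpace in
/-- Reformulated Lipschitz property (Zemouche et al.): a globally Lipschitz map
`h : ℝⁿ → ℝⁿ` (Euclidean norm, constant `γ ≥ 0`) admits bounded functions `h_ij`
such that `h(Ψ)ᵢ − h(Φ)ᵢ = ∑ⱼ h_ij(Ψ,Φ) (Ψⱼ − Φⱼ)`. -/
theorem stmt_0 (n : ℕ) (γ : ℝ) (hγ : 0 ≤ γ)
    (h : EuclideanSpace ℝ (Fin n) → EuclideanSpace ℝ (Fin n))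
    (hLip : ∀ u v : EuclideanSpace ℝ (Fin n), ‖h u - h v‖ ≤ γ * ‖u - v‖) :
    ∃ H : Fin n → Fin n → EuclideanSpace ℝ (Fin n) → EuclideanSpace ℝ (Fin n) → ℝ,
      (∀ i j Ψ Φ, |H i j Ψ Φ| ≤ γ) ∧
      (∀ (Ψ Φ : EuclideanSpace ℝ (Fin n)) (i : Fin n),
        h Ψ i - h Φ i = ∑ j : Fin n, H i j Ψ Φ * (Ψ j - Φ j)) := by
  refine ⟨fun i j Ψ Φ =>
    (h (mixPrefix Ψ Φ (j + 1)) i - h (mixPrefix Ψ Φ j) i) / (Ψ j - Φ j), ?_, ?_⟩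
  · intro i j Ψ Φ
    exact abs_div_le_of_abs_le_mul_abs hγ (abs_apply_mixPrefix_step_le Ψ Φ hLip i j)
  · intro Ψ Φ i
    rw [sub_eq_sum_mixPrefix Ψ Φ (fun x => h x i)]
    refine Finset.sum_congr rfl fun j _ => (div_mul_cancel_of_imp fun hj => ?_).symm
    simpa [hj] using abs_apply_mixPrefix_step_le Ψ Φ hLip i j
end

section
/- For any two vectors X, Y ∈ ℝ^n and any symmetric positive definite matrix Z ∈ ℝ^{n×n}, the inequality XᵀY + YᵀX ≤ (X + ZY)ᵀ (2Z)⁻¹ (X + ZY) holds (as an inequality of real numbers). -/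
open Matrix

/- Since `Z⁻¹ ≻ 0` and `Z⁻¹ Z = 1`, polarizing the quadratic form of `Z⁻¹` at `X ± ZY` gives
`(X + ZY)ᵀ Z⁻¹ (X + ZY) = (X - ZY)ᵀ Z⁻¹ (X - ZY) + 4 XᵀY ≥ 4 XᵀY`; halving the form (that is,
replacing `Z` by `2Z`) yields the claim, as `XᵀY + YᵀX = 2 XᵀY`. -/

variable {ι R : Type*} [Fintype ι]

theorem Matrix.IsSymm.dotProduct_mulVec_add_self [CommRing R] {W : Matrix ι ι R} (hW : W.IsSymm)
    (u v : ι → R) :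
    (u + v) ⬝ᵥ W *ᵥ (u + v) = (u - v) ⬝ᵥ W *ᵥ (u - v) + 4 * (u ⬝ᵥ W *ᵥ v) := by
  have hswap : v ⬝ᵥ W *ᵥ u = u ⬝ᵥ W *ᵥ v := by
    rw [dotProduct_mulVec, ← mulVec_transpose, hW.eq, dotProduct_comm]
  simp only [mulVec_add, mulVec_sub, dotProduct_add, dotProduct_sub, add_dotProduct,
    sub_dotProduct, hswap]
  ring

theorem Matrix.PosDef.four_mul_dotProduct_le [DecidableEq ι] {Z : Matrix ι ι ℝ} (hZ : Z.PosDef)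
    (X Y : ι → ℝ) :
    4 * (X ⬝ᵥ Y) ≤ (X + Z *ᵥ Y) ⬝ᵥ Z⁻¹ *ᵥ (X + Z *ᵥ Y) := by
  have hdet : IsUnit Z.det := isUnit_iff_ne_zero.mpr hZ.det_pos.ne'
  have hnonneg : 0 ≤ (X - Z *ᵥ Y) ⬝ᵥ Z⁻¹ *ᵥ (X - Z *ᵥ Y) := by
    simpa using hZ.inv.posSemidef.dotProduct_mulVec_nonneg (X - Z *ᵥ Y)
  rw [(isHermitian_iff_isSymm.mp hZ.inv.isHermitian).dotProduct_mulVec_add_self, mulVec_mulVec,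
    nonsing_inv_mul Z hdet, one_mulVec]
  linarith

/-- Variant of Young's inequality (Zemouche et al.): for `X, Y ∈ ℝⁿ` and `Z ≻ 0`,
`XᵀY + YᵀX ≤ (X + ZY)ᵀ (2Z)⁻¹ (X + ZY)`. -/
theorem stmt_2 (n : ℕ) (X Y : Fin n → ℝ) (Z : Matrix (Fin n) (Fin n) ℝ)
    (hZ : Z.PosDef) :
    X ⬝ᵥ Y + Y ⬝ᵥ X ≤
      (X + Z.mulVec Y) ⬝ᵥ ((2 : ℝ) • Z)⁻¹.mulVec (X + Z.mulVec Y) := by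
  have hdet : IsUnit Z.det := isUnit_iff_ne_zero.mpr hZ.det_pos.ne'
  have hinv : ((2 : ℝ) • Z)⁻¹ = (2 : ℝ)⁻¹ • Z⁻¹ :=
    inv_eq_left_inv (by simp [smul_smul, nonsing_inv_mul Z hdet])
  rw [hinv, smul_mulVec, dotProduct_smul, smul_eq_mul, dotProduct_comm Y X]
  linarith [hZ.four_mul_dotProduct_le X Y]
end

section
/- (Theorem 2, LPV-based LMI.) Assume μ > 0, P ≻ 0, R ∈ ℝ^{p×n}, and let Z and S be structured multiplier matrices as in the context (Z of size m·n̄² partitioned into n̄×n̄ blocks with symmetric positive definite diagonal blocks and symmetric positive semidefinite off-diagonal blocks, Z ≻ 0; S analogously of size r·p̄²). Suppose that for every Φ ∈ 𝓕 and every Ψ ∈ 𝓖 (where 𝓕 is the set of stacked matrices with (i,j)-th block φ_ij · I_{2n+q} for some φ_ij ∈ [0, f_b(i,j)], and 𝓖 analogously with ψ_ij ∈ [0, g_b(i,j)]), the symmetric 3×3 block matrix [[Σ, (𝕌 + ZℍΦ)ᵀ, (𝕄 + S𝔾Ψ)ᵀ],[𝕌 + ZℍΦ, −2Z, 0],[𝕄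 + S𝔾Ψ, 0, −2S]] is negative definite. Set L = P⁻¹Rᵀ. Then for every choice of parameter sequences f_ij : ℕ → ℝ with 0 ≤ f_ij(k) ≤ f_b(i,j) and g_ij : ℕ → ℝ with 0 ≤ g_ij(k) ≤ g_b(i,j), every ω : ℕ → ℝ^q, and every e : ℕ → ℝ^n satisfying e(k+1) = (A − LC + Σ_{i,j} f_ij(k) G ℋ_ij H_i − Σ_{i,j} g_ij(k) L F 𝒢_ij G_i) e(k) + (E − LD) ω(k) for all k, one has for all N ∈ ℕ: Σ_{k=0}^{N−1} ‖e(k)‖² ≤ μ Σ_{k=0}^{N−1} ‖ω(k)‖² + λ_max(P) ‖e(0)‖². -/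
/-!
Take `V e = eᵀ P e` as storage function. At time `k`, evaluate the quadratic form of the LMI,
taken at the parameter values `f k`, `g k`, on the vector
`(e k, ω k, e (k+1), ℍ Φ e k, 𝔾 Ψ e k)`. For this choice of the last two components the
`±2 uᵀ Z u` and `±2 wᵀ S w` contributions of the multipliers cancel, and since `P L = Rᵀ` the
remaining cross terms add up to `2 V (e (k+1))`. Negativity of the LMI then gives the
dissipation inequality `‖e k‖² + V (e (k+1)) ≤ V (e k) + μ ‖ω k‖²`; summing over `k`
telescopes, and `V (e 0) ≤ λ_max(P) ‖e 0‖²`.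
-/

open Matrix

namespace Matrix.IsHermitian

variable {n : Type*} [Fintype n] [DecidableEq n] {A : Matrix n n ℝ}

lemma posSemidef_smul_one_sub (hA : A.IsHermitian) {c : ℝ} (hc : ∀ i, hA.eigenvalues i ≤ c) :
    (c • 1 - A).PosSemidef := by
  rw [hA.spectral_theorem, ← map_one (Unitary.conjStarAlgAut ℝ _ hA.eigenvectorUnitary),
    ← map_smul, ← map_sub, Unitary.conjStarAlgAut_apply,
    (Unitary.isUnit_coe).posSemidef_star_right_conjugate_iff, ← diagonal_one, ← diagonal_smul,
    diagonal_sub, posSemidef_diagonal_iff]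
  simpa using hc

lemma dotProduct_mulVec_le_iSup_eigenvalues (hA : A.IsHermitian) (x : n → ℝ) :
    x ⬝ᵥ (A *ᵥ x) ≤ (⨆ i, hA.eigenvalues i) * (x ⬝ᵥ x) := by
  have h := (hA.posSemidef_smul_one_sub fun i ↦
    le_ciSup (Set.finite_range hA.eigenvalues).bddAbove i).dotProduct_mulVec_nonneg x
  simp only [star_trivial, sub_mulVec, smul_mulVec, one_mulVec, dotProduct_sub, dotProduct_smul,
    smul_eq_mul] at h
  linarith

end Matrix.IsHermitian

lemma sum_range_le_of_dissipation {a b V : ℕ → ℝ} {N : ℕ} (hVN : 0 ≤ V N)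
    (h : ∀ k, a k + V (k + 1) ≤ V k + b k) :
    ∑ k ∈ Finset.range N, a k ≤ ∑ k ∈ Finset.range N, b k + V 0 :=
  calc ∑ k ∈ Finset.range N, a k
      ≤ ∑ k ∈ Finset.range N, (b k + (V k - V (k + 1))) :=
        Finset.sum_le_sum fun k _ ↦ by linarith [h k]
    _ = ∑ k ∈ Finset.range N, b k + (V 0 - V N) := by
        rw [Finset.sum_add_distrib, Finset.sum_range_sub']
    _ ≤ ∑ k ∈ Finset.range N, b k + V 0 := by linarith

section Multiplier

variable {κ ι ι' μ₁ μ₂ : Type*} [Fintype κ] [Fintype ι] [Fintype ι'] [Fintype μ₁] [Fintype μ₂]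

def multiplierLMI (Sig : Matrix κ κ ℝ) (B₁ : Matrix ι κ ℝ) (B₂ : Matrix ι' κ ℝ)
    (Z : Matrix ι ι ℝ) (S : Matrix ι' ι' ℝ) : Matrix (κ ⊕ (ι ⊕ ι')) (κ ⊕ (ι ⊕ ι')) ℝ :=
  fromBlocks Sig (fromCols B₁ᵀ B₂ᵀ) (fromRows B₁ B₂)
    (fromBlocks (-((2 : ℝ) • Z)) 0 0 (-((2 : ℝ) • S)))

lemma dotProduct_multiplierLMI_mulVec {Sig : Matrix κ κ ℝ} {U : Matrix ι κ ℝ}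
    {M : Matrix ι' κ ℝ} {Z : Matrix ι ι ℝ} {S : Matrix ι' ι' ℝ} {K₁ : Matrix ι μ₁ ℝ}
    {Φ : Matrix μ₁ κ ℝ} {K₂ : Matrix ι' μ₂ ℝ} {Ψ : Matrix μ₂ κ ℝ} {x : κ → ℝ} {u : ι → ℝ}
    {w : ι' → ℝ} (hu : (K₁ * Φ) *ᵥ x = u) (hw : (K₂ * Ψ) *ᵥ x = w) :
    Sum.elim x (Sum.elim u w) ⬝ᵥ
        (multiplierLMI Sig (U + Z * K₁ * Φ) (M + S * K₂ * Ψ) Z S *ᵥ Sum.elim x (Sum.elim u w)) =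
      x ⬝ᵥ (Sig *ᵥ x) + 2 * (u ⬝ᵥ (U *ᵥ x)) + 2 * (w ⬝ᵥ (M *ᵥ x)) := by
  simp only [multiplierLMI, fromBlocks_mulVec, Sum.elim_comp_inl, Sum.elim_comp_inr,
    sumElim_dotProduct_sumElim, fromCols_mulVec_sumElim, fromRows_mulVec, zero_mulVec,
    add_zero, zero_add, dotProduct_add, dotProduct_transpose_mulVec, add_mulVec,
    Matrix.mul_assoc, ← mulVec_mulVec, hu, hw, neg_mulVec, smul_mulVec, dotProduct_neg,
    dotProduct_smul, smul_eq_mul]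
  ring

end Multiplier

section Stacks

variable {ι α σ τ κ : Type*}

/-- The paper's `Φ`. -/
def paramStack [DecidableEq κ] (φ : ι → ℝ) : Matrix (ι × κ) κ ℝ :=
  of fun rI c => if rI.2 = c then φ rI.1 else 0

/-- The paper's `ℍ`. -/
def blockDiagPad [DecidableEq ι] (H : ι → Matrix α σ ℝ) : Matrix (ι × α) (ι × (σ ⊕ τ)) ℝ :=
  of fun rI cI => if rI.1 = cI.1 then Sum.elim (fun a => H rI.1 rI.2 a) (fun _ => 0) cI.2 else 0

/-- The paper's `𝕌` (with `K i = P G ℋᵢ`) and `𝕄` (with `K i = -Rᵀ F 𝒢ᵢ`). -/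
def stackTransposeLast (K : ι → Matrix σ α ℝ) : Matrix (ι × α) (κ ⊕ (τ ⊕ σ)) ℝ :=
  of fun rI c => Sum.elim (fun _ => 0) (Sum.elim (fun _ => 0) (fun l => (K rI.1)ᵀ rI.2 l)) c

lemma blockDiagPad_mul_paramStack_mulVec [Fintype ι] [DecidableEq ι] [Fintype σ] [Fintype τ]
    [DecidableEq σ] [DecidableEq τ] (H : ι → Matrix α σ ℝ) (φ : ι → ℝ) (x : σ → ℝ)
    (y : τ → ℝ) :
    (blockDiagPad (τ := τ) H * paramStack (κ := σ ⊕ τ) φ) *ᵥ Sum.elim x y =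
      fun rI => φ rI.1 * (H rI.1 *ᵥ x) rI.2 := by
  have hΦ : paramStack φ *ᵥ Sum.elim x y = fun rI => φ rI.1 * Sum.elim x y rI.2 := by
    funext ⟨i, c⟩
    simp [paramStack, mulVec, dotProduct]
  rw [← mulVec_mulVec, hΦ]
  funext ⟨i, a⟩
  simp [blockDiagPad, mulVec, dotProduct, Fintype.sum_prod_type, Fintype.sum_sum_type,
    Finset.mul_sum, ite_mul]
  exact Finset.sum_congr rfl fun _ _ ↦ by ring

lemma dotProduct_stackTransposeLast_mulVec {β : Type*} [Fintype ι] [Fintype α] [Fintype σ]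
    [Fintype τ] [Fintype κ] [Fintype β] (K : ι → Matrix σ α ℝ) (H : ι → Matrix α β ℝ)
    (φ : ι → ℝ) (z : β → ℝ) (x : κ → ℝ) (w : τ → ℝ) (y : σ → ℝ) :
    (fun rI : ι × α => φ rI.1 * (H rI.1 *ᵥ z) rI.2) ⬝ᵥ
        (stackTransposeLast K *ᵥ Sum.elim x (Sum.elim w y)) =
      y ⬝ᵥ ((∑ i, φ i • (K i * H i)) *ᵥ z) := by
  have hK : stackTransposeLast K *ᵥ Sum.elim x (Sum.elim w y) =
      fun rI => ((K rI.1)ᵀ *ᵥ y) rI.2 := by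
    funext rI
    simp [stackTransposeLast, mulVec, dotProduct, Fintype.sum_sum_type]
  rw [hK, Matrix.sum_mulVec]
  simp only [dotProduct_sum, smul_mulVec, dotProduct_smul, ← mulVec_mulVec, smul_eq_mul]
  rw [dotProduct, Fintype.sum_prod_type]
  refine Finset.sum_congr rfl fun i _ ↦ ?_
  rw [← dotProduct_transpose_mulVec, dotProduct, Finset.mul_sum]
  exact Finset.sum_congr rfl fun _ _ ↦ by ring

end Stacks

section Observer

variable {σ τ ρ ι ι' α α' β β' : Type*} [Fintype σ] [DecidableEq σ] [Fintype τ] [DecidableEq τ]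
  [Fintype ρ]

def observerSigma (A : Matrix σ σ ℝ) (C : Matrix ρ σ ℝ) (E : Matrix σ τ ℝ) (D : Matrix ρ τ ℝ)
    (P : Matrix σ σ ℝ) (R : Matrix ρ σ ℝ) (μ : ℝ) : Matrix (σ ⊕ (τ ⊕ σ)) (σ ⊕ (τ ⊕ σ)) ℝ :=
  fromBlocks (1 - P) (fromCols 0 (Aᵀ * P - Cᵀ * R)) (fromRows 0 (P * A - Rᵀ * C))
    (fromBlocks (-(μ • (1 : Matrix τ τ ℝ))) (Eᵀ * P - Dᵀ * R) (P * E - Rᵀ * D) (-P))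

lemma dotProduct_observerSigma_mulVec {A : Matrix σ σ ℝ} {C : Matrix ρ σ ℝ} {E : Matrix σ τ ℝ}
    {D : Matrix ρ τ ℝ} {P : Matrix σ σ ℝ} {R : Matrix ρ σ ℝ} {μ : ℝ} (hP : Pᵀ = P)
    (x : σ → ℝ) (w : τ → ℝ) (y : σ → ℝ) :
    Sum.elim x (Sum.elim w y) ⬝ᵥ (observerSigma A C E D P R μ *ᵥ Sum.elim x (Sum.elim w y)) =
      x ⬝ᵥ x - x ⬝ᵥ (P *ᵥ x) - μ * (w ⬝ᵥ w) - y ⬝ᵥ (P *ᵥ y) +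
        2 * (y ⬝ᵥ ((P * A - Rᵀ * C) *ᵥ x + (P * E - Rᵀ * D) *ᵥ w)) := by
  have hA : Aᵀ * P - Cᵀ * R = (P * A - Rᵀ * C)ᵀ := by
    rw [transpose_sub, transpose_mul, transpose_mul, transpose_transpose, hP]
  have hE : Eᵀ * P - Dᵀ * R = (P * E - Rᵀ * D)ᵀ := by
    rw [transpose_sub, transpose_mul, transpose_mul, transpose_transpose, hP]
  simp only [observerSigma, hA, hE, fromBlocks_mulVec, Sum.elim_comp_inl, Sum.elim_comp_inr,
    sumElim_dotProduct_sumElim, fromCols_mulVec_sumElim, fromRows_mulVec, zero_mulVec,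
    zero_add, dotProduct_add, dotProduct_transpose_mulVec, sub_mulVec, one_mulVec,
    neg_mulVec, smul_mulVec, dotProduct_sub, dotProduct_neg, dotProduct_smul, smul_eq_mul,
    dotProduct_zero]
  ring

variable [Fintype ι] [DecidableEq ι] [Fintype ι'] [DecidableEq ι'] [Fintype α] [Fintype α']
  [Fintype β] [Fintype β']

-- The index types of `blockDiagPad` and `paramStack` are given explicitly: left to unification,
-- the products below would be elaborated with the `HMul` instance of `CStarMatrix`.
lemma dissipation_of_observerLMI
    {A : Matrix σ σ ℝ} {C : Matrix ρ σ ℝ} {E : Matrix σ τ ℝ} {D : Matrix ρ τ ℝ}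
    {G : Matrix σ β ℝ} {F : Matrix ρ β' ℝ} {Hc : ι → Matrix β α ℝ} {Gc : ι' → Matrix β' α' ℝ}
    {H : ι → Matrix α σ ℝ} {Gm : ι' → Matrix α' σ ℝ}
    {P : Matrix σ σ ℝ} {R : Matrix ρ σ ℝ} {L : Matrix σ ρ ℝ} {μ : ℝ}
    {Z : Matrix (ι × α) (ι × α) ℝ} {S : Matrix (ι' × α') (ι' × α') ℝ} {φ : ι → ℝ} {ψ : ι' → ℝ}
    (hP : Pᵀ = P) (hPL : P * L = Rᵀ)
    (hLMI : (-multiplierLMI (observerSigma A C E D P R μ)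
      (stackTransposeLast (fun i ↦ P * G * Hc i) +
        Z * blockDiagPad (τ := τ ⊕ σ) H * paramStack (κ := σ ⊕ (τ ⊕ σ)) φ)
      (stackTransposeLast (fun i ↦ -Rᵀ * F * Gc i) +
        S * blockDiagPad (τ := τ ⊕ σ) Gm * paramStack (κ := σ ⊕ (τ ⊕ σ)) ψ) Z S).PosSemidef)
    (x : σ → ℝ) (w : τ → ℝ) {y : σ → ℝ}
    (hy : y = (A - L * C + ∑ i, φ i • (G * Hc i * H i) - ∑ i, ψ i • (L * F * Gc i * Gm i)) *ᵥ x +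
      (E - L * D) *ᵥ w) :
    x ⬝ᵥ x + y ⬝ᵥ (P *ᵥ y) ≤ x ⬝ᵥ (P *ᵥ x) + μ * (w ⬝ᵥ w) := by
  have hPy : P *ᵥ y = (P * A - Rᵀ * C) *ᵥ x + (P * E - Rᵀ * D) *ᵥ w +
      (∑ i, φ i • (P * G * Hc i * H i)) *ᵥ x + (∑ i, ψ i • (-Rᵀ * F * Gc i * Gm i)) *ᵥ x := by
    have hPA : P * (A - L * C + ∑ i, φ i • (G * Hc i * H i) - ∑ i, ψ i • (L * F * Gc i * Gm i)) =
        P * A - Rᵀ * C + ∑ i, φ i • (P * G * Hc i * H i) +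
          ∑ i, ψ i • (-Rᵀ * F * Gc i * Gm i) := by
      simp only [Matrix.mul_sub, Matrix.mul_add, Finset.mul_sum, Matrix.mul_smul,
        ← Matrix.mul_assoc, hPL, Matrix.neg_mul, smul_neg, Finset.sum_neg_distrib]
      abel
    have hPE : P * (E - L * D) = P * E - Rᵀ * D := by
      rw [Matrix.mul_sub, ← Matrix.mul_assoc, hPL]
    rw [hy, mulVec_add, mulVec_mulVec, mulVec_mulVec, hPA, hPE, add_mulVec, add_mulVec]
    abel
  have hQ := hLMI.dotProduct_mulVec_nonneg
    (Sum.elim (Sum.elim x (Sum.elim w y)) (Sum.elim (fun rI ↦ φ rI.1 * (H rI.1 *ᵥ x) rI.2)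
      (fun rI ↦ ψ rI.1 * (Gm rI.1 *ᵥ x) rI.2)))
  rw [star_trivial, neg_mulVec, dotProduct_neg,
    dotProduct_multiplierLMI_mulVec (blockDiagPad_mul_paramStack_mulVec H φ x _)
      (blockDiagPad_mul_paramStack_mulVec Gm ψ x _),
    dotProduct_observerSigma_mulVec hP, dotProduct_stackTransposeLast_mulVec,
    dotProduct_stackTransposeLast_mulVec, hPy] at hQ
  rw [hPy]
  simp only [dotProduct_add] at hQ ⊢
  linarith

end Observer

theorem stmt_13_general
    (n p q m r n' p' : ℕ)
    (A : Matrix (Fin n) (Fin n) ℝ) (C : Matrix (Fin p) (Fin n) ℝ)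
    (E : Matrix (Fin n) (Fin q) ℝ) (D : Matrix (Fin p) (Fin q) ℝ)
    (G : Matrix (Fin n) (Fin m) ℝ) (F : Matrix (Fin p) (Fin r) ℝ)
    (H : Fin m → Matrix (Fin n') (Fin n) ℝ)
    (Gm : Fin r → Matrix (Fin p') (Fin n) ℝ)
    (fb : Fin m → Fin n' → ℝ) (gb : Fin r → Fin p' → ℝ)
    (μ : ℝ)
    (P : Matrix (Fin n) (Fin n) ℝ) (hP : P.PosDef)
    (R : Matrix (Fin p) (Fin n) ℝ)
    (Z : Matrix ((Fin m × Fin n') × Fin n') ((Fin m × Fin n') × Fin n') ℝ)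
    (S : Matrix ((Fin r × Fin p') × Fin p') ((Fin r × Fin p') × Fin p') ℝ) :
    -- the observer gain
    let L : Matrix (Fin n) (Fin p) ℝ := P⁻¹ * Rᵀ
    -- canonical matrices ℋ_ij = e_m(i) e_{n̄}(j)ᵀ and 𝒢_ij = e_r(i) e_{p̄}(j)ᵀ
    let Hcal : Fin m → Fin n' → Matrix (Fin m) (Fin n') ℝ := fun i j =>
      Matrix.single i j (1 : ℝ)
    let Gcal : Fin r → Fin p' → Matrix (Fin r) (Fin p') ℝ := fun i j =>
      Matrix.single i j (1 : ℝ)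
    -- Σ, as a 3×3 block matrix with block sizes n, q, n
    let Sig : Matrix (Fin n ⊕ (Fin q ⊕ Fin n)) (Fin n ⊕ (Fin q ⊕ Fin n)) ℝ :=
      Matrix.fromBlocks (1 - P) (Matrix.fromCols 0 (Aᵀ * P - Cᵀ * R))
        (Matrix.fromRows 0 (P * A - Rᵀ * C))
        (Matrix.fromBlocks (-(μ • (1 : Matrix (Fin q) (Fin q) ℝ)))
          (Eᵀ * P - Dᵀ * R) (P * E - Rᵀ * D) (-P))
    -- 𝕌, stacked over the pairs (i,j), with blocks [0 0 (P G ℋ_ij)ᵀ]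
    let U : Matrix ((Fin m × Fin n') × Fin n') (Fin n ⊕ (Fin q ⊕ Fin n)) ℝ :=
      Matrix.of fun rI c =>
        Sum.elim (fun _ => (0 : ℝ)) (Sum.elim (fun _ => (0 : ℝ))
          (fun l => (P * G * Hcal rI.1.1 rI.1.2)ᵀ rI.2 l)) c
    -- ℍ, block diagonal with diagonal blocks ℍ_i = [H_i 0 0]
    let Hb : Matrix ((Fin m × Fin n') × Fin n')
        ((Fin m × Fin n') × (Fin n ⊕ (Fin q ⊕ Fin n))) ℝ :=
      Matrix.of fun rI cI =>
        if rI.1 = cI.1 then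
          Sum.elim (fun a => H rI.1.1 rI.2 a) (fun _ => (0 : ℝ)) cI.2
        else 0
    -- a stacked parameter matrix with blocks φ_ij • I
    let stackF : (Fin m → Fin n' → ℝ) →
        Matrix ((Fin m × Fin n') × (Fin n ⊕ (Fin q ⊕ Fin n)))
          (Fin n ⊕ (Fin q ⊕ Fin n)) ℝ :=
      fun φ => Matrix.of fun rI c => if rI.2 = c then φ rI.1.1 rI.1.2 else 0
    -- 𝕄, stacked with blocks [0 0 (−Rᵀ F 𝒢_ij)ᵀ]
    let Mb : Matrix ((Fin r × Fin p') × Fin p') (Fin n ⊕ (Fin q ⊕ Fin n)) ℝ :=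
      Matrix.of fun rI c =>
        Sum.elim (fun _ => (0 : ℝ)) (Sum.elim (fun _ => (0 : ℝ))
          (fun l => (-(Rᵀ) * F * Gcal rI.1.1 rI.1.2)ᵀ rI.2 l)) c
    -- 𝔾, block diagonal with diagonal blocks 𝔾_i = [G_i 0 0]
    let Gb : Matrix ((Fin r × Fin p') × Fin p')
        ((Fin r × Fin p') × (Fin n ⊕ (Fin q ⊕ Fin n))) ℝ :=
      Matrix.of fun rI cI =>
        if rI.1 = cI.1 then
          Sum.elim (fun a => Gm rI.1.1 rI.2 a) (fun _ => (0 : ℝ)) cI.2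
        else 0
    -- a stacked parameter matrix with blocks ψ_ij • I
    let stackG : (Fin r → Fin p' → ℝ) →
        Matrix ((Fin r × Fin p') × (Fin n ⊕ (Fin q ⊕ Fin n)))
          (Fin n ⊕ (Fin q ⊕ Fin n)) ℝ :=
      fun ψ => Matrix.of fun rI c => if rI.2 = c then ψ rI.1.1 rI.1.2 else 0
    -- the LMI: for every Φ ∈ 𝓕 and Ψ ∈ 𝓖 the 3×3 block matrix is ≺ 0
    (∀ (φ : Fin m → Fin n' → ℝ) (ψ : Fin r → Fin p' → ℝ),
        (∀ i j, 0 ≤ φ i j ∧ φ i j ≤ fb i j) →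
        (∀ i j, 0 ≤ ψ i j ∧ ψ i j ≤ gb i j) →
        (-(Matrix.fromBlocks Sig
            (Matrix.fromCols (U + Z * Hb * stackF φ)ᵀ
              (Mb + S * Gb * stackG ψ)ᵀ)
            (Matrix.fromRows (U + Z * Hb * stackF φ) (Mb + S * Gb * stackG ψ))
            (Matrix.fromBlocks (-((2 : ℝ) • Z)) 0 0 (-((2 : ℝ) • S))))).PosDef) →
      ∀ (f : Fin m → Fin n' → ℕ → ℝ) (g : Fin r → Fin p' → ℕ → ℝ)
        (ω : ℕ → Fin q → ℝ) (e : ℕ → Fin n → ℝ),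
        (∀ i j k, 0 ≤ f i j k ∧ f i j k ≤ fb i j) →
        (∀ i j k, 0 ≤ g i j k ∧ g i j k ≤ gb i j) →
        (∀ k : ℕ, e (k + 1) =
          (A - L * C + ∑ i : Fin m, ∑ j : Fin n', f i j k • (G * Hcal i j * H i)
              - ∑ i : Fin r, ∑ j : Fin p', g i j k • (L * F * Gcal i j * Gm i)).mulVec
            (e k) + (E - L * D).mulVec (ω k)) →
        ∀ N : ℕ,
          ∑ k ∈ Finset.range N, e k ⬝ᵥ e k ≤
            μ * ∑ k ∈ Finset.range N, ω k ⬝ᵥ ω k +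
              (⨆ i, hP.isHermitian.eigenvalues i) * (e 0 ⬝ᵥ e 0) := by
  intro L Hcal Gcal Sig U Hb stackF Mb Gb stackG hLMI f g ω e hf hg hdyn N
  have hPL : P * L = Rᵀ :=
    mul_nonsing_inv_cancel_left P Rᵀ (isUnit_iff_ne_zero.mpr hP.det_pos.ne')
  have hPt : Pᵀ = P := hP.isHermitian
  have hstep (k : ℕ) : e k ⬝ᵥ e k + e (k + 1) ⬝ᵥ (P *ᵥ e (k + 1)) ≤
      e k ⬝ᵥ (P *ᵥ e k) + μ * (ω k ⬝ᵥ ω k) :=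
    dissipation_of_observerLMI (ι := Fin m × Fin n') (ι' := Fin r × Fin p')
      (Hc := fun ij ↦ Hcal ij.1 ij.2) (Gc := fun ij ↦ Gcal ij.1 ij.2)
      (H := fun ij ↦ H ij.1) (Gm := fun ij ↦ Gm ij.1)
      (φ := fun ij ↦ f ij.1 ij.2 k) (ψ := fun ij ↦ g ij.1 ij.2 k) hPt hPL
      (hLMI _ _ (fun i j ↦ hf i j k) (fun i j ↦ hg i j k)).posSemidef _ _
      (by rw [hdyn k]; simp only [Fintype.sum_prod_type])
  calc ∑ k ∈ Finset.range N, e k ⬝ᵥ e k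
      ≤ ∑ k ∈ Finset.range N, μ * (ω k ⬝ᵥ ω k) + e 0 ⬝ᵥ (P *ᵥ e 0) :=
        sum_range_le_of_dissipation (V := fun k ↦ e k ⬝ᵥ (P *ᵥ e k))
          (hP.posSemidef.dotProduct_mulVec_nonneg (e N)) hstep
    _ ≤ _ := by
        rw [← Finset.mul_sum]
        gcongr
        exact hP.isHermitian.dotProduct_mulVec_le_iSup_eigenvalues _

/-- Theorem 2 of the paper (LPV-based LMI): if the 3×3 block LMI holds (≺ 0) at
every parameter matrix `Φ ∈ 𝓕`, `Ψ ∈ 𝓖`, then the H∞ performance bound follows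
for the observer error dynamics, with `L = P⁻¹Rᵀ`. -/
theorem stmt_13
    (n p q m r n' p' : ℕ)
    (A : Matrix (Fin n) (Fin n) ℝ) (C : Matrix (Fin p) (Fin n) ℝ)
    (E : Matrix (Fin n) (Fin q) ℝ) (D : Matrix (Fin p) (Fin q) ℝ)
    (G : Matrix (Fin n) (Fin m) ℝ) (F : Matrix (Fin p) (Fin r) ℝ)
    (H : Fin m → Matrix (Fin n') (Fin n) ℝ)
    (Gm : Fin r → Matrix (Fin p') (Fin n) ℝ)
    (fb : Fin m → Fin n' → ℝ) (gb : Fin r → Fin p' → ℝ)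
    (hfb : ∀ i j, 0 ≤ fb i j) (hgb : ∀ i j, 0 ≤ gb i j)
    (μ : ℝ) (hμ : 0 < μ)
    (P : Matrix (Fin n) (Fin n) ℝ) (hP : P.PosDef)
    (R : Matrix (Fin p) (Fin n) ℝ)
    (Z : Matrix ((Fin m × Fin n') × Fin n') ((Fin m × Fin n') × Fin n') ℝ)
    (S : Matrix ((Fin r × Fin p') × Fin p') ((Fin r × Fin p') × Fin p') ℝ)
    (hZ : Z.PosDef)
    (hZdiag : ∀ ij : Fin m × Fin n',
      (Matrix.of fun k l => Z (ij, k) (ij, l)).PosDef)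
    (hZoff : ∀ ij ij' : Fin m × Fin n', ij ≠ ij' →
      (Matrix.of fun k l => Z (ij, k) (ij', l)).PosSemidef)
    (hS : S.PosDef)
    (hSdiag : ∀ ij : Fin r × Fin p',
      (Matrix.of fun k l => S (ij, k) (ij, l)).PosDef)
    (hSoff : ∀ ij ij' : Fin r × Fin p', ij ≠ ij' →
      (Matrix.of fun k l => S (ij, k) (ij', l)).PosSemidef) :
    -- the observer gain
    let L : Matrix (Fin n) (Fin p) ℝ := P⁻¹ * Rᵀ
    -- canonical matrices ℋ_ij = e_m(i) e_{n̄}(j)ᵀ and 𝒢_ij = e_r(i) e_{p̄}(j)ᵀ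
    let Hcal : Fin m → Fin n' → Matrix (Fin m) (Fin n') ℝ := fun i j =>
      Matrix.single i j (1 : ℝ)
    let Gcal : Fin r → Fin p' → Matrix (Fin r) (Fin p') ℝ := fun i j =>
      Matrix.single i j (1 : ℝ)
    -- Σ, as a 3×3 block matrix with block sizes n, q, n
    let Sig : Matrix (Fin n ⊕ (Fin q ⊕ Fin n)) (Fin n ⊕ (Fin q ⊕ Fin n)) ℝ :=
      Matrix.fromBlocks (1 - P) (Matrix.fromCols 0 (Aᵀ * P - Cᵀ * R))
        (Matrix.fromRows 0 (P * A - Rᵀ * C))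
        (Matrix.fromBlocks (-(μ • (1 : Matrix (Fin q) (Fin q) ℝ)))
          (Eᵀ * P - Dᵀ * R) (P * E - Rᵀ * D) (-P))
    -- 𝕌, stacked over the pairs (i,j), with blocks [0 0 (P G ℋ_ij)ᵀ]
    let U : Matrix ((Fin m × Fin n') × Fin n') (Fin n ⊕ (Fin q ⊕ Fin n)) ℝ :=
      Matrix.of fun rI c =>
        Sum.elim (fun _ => (0 : ℝ)) (Sum.elim (fun _ => (0 : ℝ))
          (fun l => (P * G * Hcal rI.1.1 rI.1.2)ᵀ rI.2 l)) c
    -- ℍ, block diagonal with diagonal blocks ℍ_i = [H_i 0 0]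
    let Hb : Matrix ((Fin m × Fin n') × Fin n')
        ((Fin m × Fin n') × (Fin n ⊕ (Fin q ⊕ Fin n))) ℝ :=
      Matrix.of fun rI cI =>
        if rI.1 = cI.1 then
          Sum.elim (fun a => H rI.1.1 rI.2 a) (fun _ => (0 : ℝ)) cI.2
        else 0
    -- a stacked parameter matrix with blocks φ_ij • I
    let stackF : (Fin m → Fin n' → ℝ) →
        Matrix ((Fin m × Fin n') × (Fin n ⊕ (Fin q ⊕ Fin n)))
          (Fin n ⊕ (Fin q ⊕ Fin n)) ℝ :=
      fun φ => Matrix.of fun rI c => if rI.2 = c then φ rI.1.1 rI.1.2 else 0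
    -- 𝕄, stacked with blocks [0 0 (−Rᵀ F 𝒢_ij)ᵀ]
    let Mb : Matrix ((Fin r × Fin p') × Fin p') (Fin n ⊕ (Fin q ⊕ Fin n)) ℝ :=
      Matrix.of fun rI c =>
        Sum.elim (fun _ => (0 : ℝ)) (Sum.elim (fun _ => (0 : ℝ))
          (fun l => (-(Rᵀ) * F * Gcal rI.1.1 rI.1.2)ᵀ rI.2 l)) c
    -- 𝔾, block diagonal with diagonal blocks 𝔾_i = [G_i 0 0]
    let Gb : Matrix ((Fin r × Fin p') × Fin p')
        ((Fin r × Fin p') × (Fin n ⊕ (Fin q ⊕ Fin n))) ℝ :=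
      Matrix.of fun rI cI =>
        if rI.1 = cI.1 then
          Sum.elim (fun a => Gm rI.1.1 rI.2 a) (fun _ => (0 : ℝ)) cI.2
        else 0
    -- a stacked parameter matrix with blocks ψ_ij • I
    let stackG : (Fin r → Fin p' → ℝ) →
        Matrix ((Fin r × Fin p') × (Fin n ⊕ (Fin q ⊕ Fin n)))
          (Fin n ⊕ (Fin q ⊕ Fin n)) ℝ :=
      fun ψ => Matrix.of fun rI c => if rI.2 = c then ψ rI.1.1 rI.1.2 else 0
    -- the LMI: for every Φ ∈ 𝓕 and Ψ ∈ 𝓖 the 3×3 block matrix is ≺ 0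
    (∀ (φ : Fin m → Fin n' → ℝ) (ψ : Fin r → Fin p' → ℝ),
        (∀ i j, 0 ≤ φ i j ∧ φ i j ≤ fb i j) →
        (∀ i j, 0 ≤ ψ i j ∧ ψ i j ≤ gb i j) →
        (-(Matrix.fromBlocks Sig
            (Matrix.fromCols (U + Z * Hb * stackF φ)ᵀ
              (Mb + S * Gb * stackG ψ)ᵀ)
            (Matrix.fromRows (U + Z * Hb * stackF φ) (Mb + S * Gb * stackG ψ))
            (Matrix.fromBlocks (-((2 : ℝ) • Z)) 0 0 (-((2 : ℝ) • S))))).PosDef) →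
      ∀ (f : Fin m → Fin n' → ℕ → ℝ) (g : Fin r → Fin p' → ℕ → ℝ)
        (ω : ℕ → Fin q → ℝ) (e : ℕ → Fin n → ℝ),
        (∀ i j k, 0 ≤ f i j k ∧ f i j k ≤ fb i j) →
        (∀ i j k, 0 ≤ g i j k ∧ g i j k ≤ gb i j) →
        (∀ k : ℕ, e (k + 1) =
          (A - L * C + ∑ i : Fin m, ∑ j : Fin n', f i j k • (G * Hcal i j * H i)
              - ∑ i : Fin r, ∑ j : Fin p', g i j k • (L * F * Gcal i j * Gm i)).mulVec
            (e k) + (E - L * D).mulVec (ω k)) →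
        ∀ N : ℕ,
          ∑ k ∈ Finset.range N, e k ⬝ᵥ e k ≤
            μ * ∑ k ∈ Finset.range N, ω k ⬝ᵥ ω k +
              (⨆ i, hP.isHermitian.eigenvalues i) * (e 0 ⬝ᵥ e 0) :=
  stmt_13_general n p q m r n' p' A C E D G F H Gm fb gb μ P hP R Z S
end

section
/- (Corollary 2: nonlinear systems with linear output, LPV-based LMI.) Assume μ > 0, P ≻ 0, R ∈ ℝ^{p×n}, and let Z be a structured multiplier matrix as in the context (size m·n̄², partitioned into n̄×n̄ blocks with symmetric positive definite diagonal blocks and symmetric positive semidefinite off-diagonal blocks, Z ≻ 0). Suppose that for every Φ ∈ 𝓕 (where 𝓕 is the set of stacked matrices whose (i,j)-th block is φ_ij · I_{2n+q} for some φ_ij ∈ [0, f_b(i,j)]), the symmetric 2×2 block matrix [[Σ, (𝕌 + ZℍΦ)ᵀ],[𝕌 + ZℍΦ, −2Z]] is negative definite. Set L = P⁻¹Rᵀ. Then for every choice of parameter sequences f_ij : ℕ → ℝ with 0 ≤ f_ij(k) ≤ f_b(i,j) (1 ≤ i ≤ m, 1 ≤ j ≤ n̄), every ω : ℕ → ℝ^q,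 and every e : ℕ → ℝ^n satisfying e(k+1) = (A − LC + Σ_{i,j} f_ij(k) G ℋ_ij H_i) e(k) + (E − LD) ω(k) for all k, one has for all N ∈ ℕ: Σ_{k=0}^{N−1} ‖e(k)‖² ≤ μ Σ_{k=0}^{N−1} ‖ω(k)‖² + λ_max(P) ‖e(0)‖². -/
/-! Evaluate the LMI at the point `(v, ℍΦv)` with `v = (e k, ω k, e (k+1))`: the multiplier terms
in `Z` cancel there, and since `P e(k+1) = (PA - RᵀC + P Γₖ) e(k) + (PE - RᵀD) ω(k)` for
`L = P⁻¹Rᵀ` and `Γₖ = ∑ fᵢⱼ(k) G ℋᵢⱼ Hᵢ`, what remains is the dissipation inequality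
`‖e k‖² - μ ‖ω k‖² + V (e (k+1)) - V (e k) ≤ 0` for the storage function `V x = xᵀPx`.
Summing over `k` telescopes, and `V (e 0) ≤ λ_max(P) ‖e 0‖²`. -/

open Matrix

theorem Matrix.IsHermitian.dotProduct_mulVec_le_iSup_eigenvalues_mul {n : Type*} [Fintype n]
    [DecidableEq n] {A : Matrix n n ℝ} (hA : A.IsHermitian) (x : n → ℝ) :
    x ⬝ᵥ A *ᵥ x ≤ (⨆ i, hA.eigenvalues i) * (x ⬝ᵥ x) := by
  set c := ⨆ i, hA.eigenvalues i
  -- `c • 1 - A` is unitarily conjugate to the diagonal matrix of the `c - λᵢ ≥ 0`.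
  have hpsd : (c • 1 - A).PosSemidef := by
    conv => enter [1, 2]; rw [hA.spectral_theorem]
    rw [← map_one (Unitary.conjStarAlgAut ℝ _ hA.eigenvectorUnitary), ← map_smul, ← map_sub,
      Unitary.conjStarAlgAut_apply, Unitary.isUnit_coe.posSemidef_star_right_conjugate_iff,
      smul_one_eq_diagonal, diagonal_sub, posSemidef_diagonal_iff]
    exact fun i => sub_nonneg.mpr (le_ciSup (Set.finite_range _).bddAbove i)
  have := hpsd.dotProduct_mulVec_nonneg x
  simp only [star_trivial, sub_mulVec, smul_mulVec, one_mulVec, dotProduct_sub,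
    dotProduct_smul, smul_eq_mul] at this
  linarith

theorem Finset.sum_range_le_add_of_dissipation {a b V : ℕ → ℝ}
    (h : ∀ k, a k + V (k + 1) ≤ b k + V k) (N : ℕ) (hV : 0 ≤ V N) :
    ∑ k ∈ Finset.range N, a k ≤ ∑ k ∈ Finset.range N, b k + V 0 := by
  suffices ∀ M, ∑ k ∈ Finset.range M, a k + V M ≤ ∑ k ∈ Finset.range M, b k + V 0 by
    linarith [this N]
  intro M
  induction M with
  | zero => simp
  | succ M ih => rw [Finset.sum_range_succ, Finset.sum_range_succ]; linarith [h M]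

theorem Matrix.sumElim_dotProduct_fromBlocks_mulVec_sumElim {l m α : Type*} [Fintype l]
    [Fintype m] [NonUnitalNonAssocSemiring α] (A : Matrix l l α) (B : Matrix l m α)
    (C : Matrix m l α) (D : Matrix m m α) (x : l → α) (y : m → α) :
    Sum.elim x y ⬝ᵥ fromBlocks A B C D *ᵥ Sum.elim x y =
      x ⬝ᵥ A *ᵥ x + x ⬝ᵥ B *ᵥ y + (y ⬝ᵥ C *ᵥ x + y ⬝ᵥ D *ᵥ y) := by
  simp only [fromBlocks_mulVec, Sum.elim_comp_inl, Sum.elim_comp_inr, sumElim_dotProduct_sumElim,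
    dotProduct_add]

theorem Matrix.dotProduct_fromBlocks_mulVec_graph {ι κ α : Type*} [Fintype ι] [Fintype κ]
    [CommRing α] (S : Matrix ι ι α) (U : Matrix κ ι α) (Z : Matrix κ κ α) (K : Matrix κ ι α)
    (v : ι → α) :
    Sum.elim v (K *ᵥ v) ⬝ᵥ fromBlocks S (U + Z * K)ᵀ (U + Z * K) (-((2 : α) • Z)) *ᵥ
        Sum.elim v (K *ᵥ v) =
      v ⬝ᵥ S *ᵥ v + 2 * (K *ᵥ v ⬝ᵥ U *ᵥ v) := by
  rw [sumElim_dotProduct_fromBlocks_mulVec_sumElim, dotProduct_transpose_mulVec]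
  simp only [add_mulVec, ← mulVec_mulVec, dotProduct_add, neg_mulVec, smul_mulVec, dotProduct_neg,
    dotProduct_smul, smul_eq_mul]
  ring

theorem Matrix.dotProduct_mulVec_nonpos_of_posDef_neg {ι : Type*} [Fintype ι]
    {M : Matrix ι ι ℝ} (hM : (-M).PosDef) (x : ι → ℝ) : x ⬝ᵥ M *ᵥ x ≤ 0 := by
  have := hM.posSemidef.dotProduct_mulVec_nonneg x
  rw [star_trivial, neg_mulVec, dotProduct_neg] at this
  linarith

section ObserverLMI

variable {n p q m n' : ℕ}

/- `lmiSigma`, `lmiU`, `lmiH`, `lmiPhi` are the paper's `Σ`, `𝕌`, `ℍ` and stacked `Φ`, with the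
state of the LMI indexed by `Fin n ⊕ (Fin q ⊕ Fin n)` for `(e(k), ω(k), e(k+1))`;
`lpvGain G H φ = ∑ φᵢⱼ G ℋᵢⱼ Hᵢ`. The named dimension arguments below keep the elaborator from
choosing `CStarMatrix`'s multiplication while the dimensions are still unknown. -/

def lmiSigma (A : Matrix (Fin n) (Fin n) ℝ) (C : Matrix (Fin p) (Fin n) ℝ)
    (E : Matrix (Fin n) (Fin q) ℝ) (D : Matrix (Fin p) (Fin q) ℝ)
    (P : Matrix (Fin n) (Fin n) ℝ) (R : Matrix (Fin p) (Fin n) ℝ) (μ : ℝ) :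
    Matrix (Fin n ⊕ (Fin q ⊕ Fin n)) (Fin n ⊕ (Fin q ⊕ Fin n)) ℝ :=
  fromBlocks (1 - P) (fromCols 0 (Aᵀ * P - Cᵀ * R)) (fromRows 0 (P * A - Rᵀ * C))
    (fromBlocks (-(μ • (1 : Matrix (Fin q) (Fin q) ℝ))) (Eᵀ * P - Dᵀ * R) (P * E - Rᵀ * D)
      (-P))

def lmiU (P : Matrix (Fin n) (Fin n) ℝ) (G : Matrix (Fin n) (Fin m) ℝ) :
    Matrix ((Fin m × Fin n') × Fin n') (Fin n ⊕ (Fin q ⊕ Fin n)) ℝ :=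
  of fun r c => Sum.elim (fun _ => 0)
    (Sum.elim (fun _ => 0) (fun l => (P * G * single r.1.1 r.1.2 (1 : ℝ))ᵀ r.2 l)) c

def lmiH (H : Fin m → Matrix (Fin n') (Fin n) ℝ) :
    Matrix ((Fin m × Fin n') × Fin n') ((Fin m × Fin n') × (Fin n ⊕ (Fin q ⊕ Fin n))) ℝ :=
  of fun r c => if r.1 = c.1 then Sum.elim (fun a => H r.1.1 r.2 a) (fun _ => 0) c.2 else 0

def lmiPhi (φ : Fin m → Fin n' → ℝ) :
    Matrix ((Fin m × Fin n') × (Fin n ⊕ (Fin q ⊕ Fin n))) (Fin n ⊕ (Fin q ⊕ Fin n)) ℝ :=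
  of fun r c => if r.2 = c then φ r.1.1 r.1.2 else 0

def lpvGain (G : Matrix (Fin n) (Fin m) ℝ) (H : Fin m → Matrix (Fin n') (Fin n) ℝ)
    (φ : Fin m → Fin n' → ℝ) : Matrix (Fin n) (Fin n) ℝ :=
  ∑ i, ∑ j, φ i j • (G * single i j (1 : ℝ) * H i)

theorem sumElim_dotProduct_lmiSigma_mulVec (A : Matrix (Fin n) (Fin n) ℝ)
    (C : Matrix (Fin p) (Fin n) ℝ)
    (E : Matrix (Fin n) (Fin q) ℝ) (D : Matrix (Fin p) (Fin q) ℝ)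
    {P : Matrix (Fin n) (Fin n) ℝ} (hP : Pᵀ = P) (R : Matrix (Fin p) (Fin n) ℝ) (μ : ℝ)
    (x : Fin n → ℝ) (y : Fin q → ℝ) (z : Fin n → ℝ) :
    Sum.elim x (Sum.elim y z) ⬝ᵥ lmiSigma A C E D P R μ *ᵥ Sum.elim x (Sum.elim y z) =
      x ⬝ᵥ x - x ⬝ᵥ P *ᵥ x - μ * (y ⬝ᵥ y) - z ⬝ᵥ P *ᵥ z
        + 2 * (z ⬝ᵥ ((P * A - Rᵀ * C) *ᵥ x + (P * E - Rᵀ * D) *ᵥ y)) := by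
  have hK : Aᵀ * P - Cᵀ * R = (P * A - Rᵀ * C)ᵀ := by simp [transpose_sub, hP]
  have hF : Eᵀ * P - Dᵀ * R = (P * E - Rᵀ * D)ᵀ := by simp [transpose_sub, hP]
  rw [lmiSigma, hK, hF, sumElim_dotProduct_fromBlocks_mulVec_sumElim,
    sumElim_dotProduct_fromBlocks_mulVec_sumElim, fromCols_mulVec_sumElim, fromRows_mulVec,
    sumElim_dotProduct_sumElim]
  simp only [dotProduct_transpose_mulVec, zero_mulVec, zero_add, dotProduct_zero, sub_mulVec,
    one_mulVec, neg_mulVec, smul_mulVec, dotProduct_sub, dotProduct_neg, dotProduct_smul,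
    smul_eq_mul, dotProduct_add]
  ring

theorem lmiH_mul_lmiPhi_mulVec (H : Fin m → Matrix (Fin n') (Fin n) ℝ)
    (φ : Fin m → Fin n' → ℝ) (x : Fin n → ℝ) (y : Fin q → ℝ) (z : Fin n → ℝ) :
    (lmiH (q := q) H * lmiPhi (n := n) (q := q) φ) *ᵥ Sum.elim x (Sum.elim y z) =
      fun r => φ r.1.1 r.1.2 * (H r.1.1 *ᵥ x) r.2 := by
  have hΦ : lmiPhi φ *ᵥ Sum.elim x (Sum.elim y z) =
      fun r => φ r.1.1 r.1.2 * Sum.elim x (Sum.elim y z) r.2 := by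
    ext r
    simp [lmiPhi, mulVec, dotProduct]
  ext r
  rw [← mulVec_mulVec, hΦ]
  simp [lmiH, mulVec, dotProduct, Fintype.sum_prod_type, Fintype.sum_sum_type, Finset.mul_sum,
    mul_left_comm]

theorem lmiU_mulVec (P : Matrix (Fin n) (Fin n) ℝ) (G : Matrix (Fin n) (Fin m) ℝ)
    (x : Fin n → ℝ) (y : Fin q → ℝ) (z : Fin n → ℝ) :
    (lmiU P G : Matrix ((Fin m × Fin n') × Fin n') _ ℝ) *ᵥ Sum.elim x (Sum.elim y z) =
      fun r => ((P * G * single r.1.1 r.1.2 (1 : ℝ))ᵀ *ᵥ z) r.2 := by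
  ext r
  simp [lmiU, mulVec, dotProduct, Fintype.sum_sum_type]

theorem lmiH_mul_lmiPhi_mulVec_dotProduct_lmiU_mulVec (P : Matrix (Fin n) (Fin n) ℝ)
    (G : Matrix (Fin n) (Fin m) ℝ) (H : Fin m → Matrix (Fin n') (Fin n) ℝ)
    (φ : Fin m → Fin n' → ℝ) (x : Fin n → ℝ) (y : Fin q → ℝ) (z : Fin n → ℝ) :
    (lmiH (q := q) H * lmiPhi (n := n) (q := q) φ) *ᵥ Sum.elim x (Sum.elim y z) ⬝ᵥ
        lmiU P G *ᵥ Sum.elim x (Sum.elim y z) =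
      z ⬝ᵥ P *ᵥ lpvGain G H φ *ᵥ x := by
  calc _ = ∑ i, ∑ j, φ i j * (H i *ᵥ x ⬝ᵥ (P * G * single i j (1 : ℝ))ᵀ *ᵥ z) := by
        simp only [lmiH_mul_lmiPhi_mulVec, lmiU_mulVec, dotProduct, Fintype.sum_prod_type,
          Finset.mul_sum, mul_assoc]
    _ = ∑ i, ∑ j, φ i j * (z ⬝ᵥ P *ᵥ (G * single i j (1 : ℝ) * H i) *ᵥ x) := by
        simp only [dotProduct_transpose_mulVec, mulVec_mulVec, Matrix.mul_assoc]
    _ = _ := by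
        simp only [lpvGain, sum_mulVec, smul_mulVec, mulVec_sum, mulVec_smul, dotProduct_sum,
          dotProduct_smul, smul_eq_mul]

theorem dissipation_step_of_lmi {A : Matrix (Fin n) (Fin n) ℝ} {C : Matrix (Fin p) (Fin n) ℝ}
    {E : Matrix (Fin n) (Fin q) ℝ} {D : Matrix (Fin p) (Fin q) ℝ}
    {G : Matrix (Fin n) (Fin m) ℝ}
    {H : Fin m → Matrix (Fin n') (Fin n) ℝ} {μ : ℝ} {P : Matrix (Fin n) (Fin n) ℝ}
    (hP : P.PosDef) {R : Matrix (Fin p) (Fin n) ℝ}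
    {Z : Matrix ((Fin m × Fin n') × Fin n') ((Fin m × Fin n') × Fin n') ℝ}
    {φ : Fin m → Fin n' → ℝ}
    (hLMI : (-(fromBlocks (lmiSigma A C E D P R μ)
      (lmiU P G + Z * lmiH (q := q) H * lmiPhi (n := n) (q := q) φ)ᵀ
      (lmiU P G + Z * lmiH (q := q) H * lmiPhi (n := n) (q := q) φ) (-((2 : ℝ) • Z)))).PosDef)
    (x : Fin n → ℝ) (y : Fin q → ℝ) {z : Fin n → ℝ}
    (hz : z = (A - P⁻¹ * Rᵀ * C + lpvGain G H φ) *ᵥ x + (E - P⁻¹ * Rᵀ * D) *ᵥ y) :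
    x ⬝ᵥ x + z ⬝ᵥ P *ᵥ z ≤ μ * (y ⬝ᵥ y) + x ⬝ᵥ P *ᵥ x := by
  have hPt : Pᵀ = P := by simpa using hP.isHermitian.eq
  have hPinv : P * P⁻¹ = 1 := mul_nonsing_inv _ (isUnit_iff_ne_zero.mpr hP.det_pos.ne')
  have hPz : P *ᵥ z = (P * A - Rᵀ * C) *ᵥ x + (P * E - Rᵀ * D) *ᵥ y +
      P *ᵥ lpvGain G H φ *ᵥ x := by
    simp only [hz, mulVec_add, mulVec_mulVec, Matrix.mul_sub, ← Matrix.mul_assoc,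
      hPinv, Matrix.one_mul, add_mulVec]
    abel
  set v := Sum.elim x (Sum.elim y z)
  have h := dotProduct_mulVec_nonpos_of_posDef_neg hLMI
    (Sum.elim v ((lmiH (q := q) H * lmiPhi (n := n) (q := q) φ) *ᵥ v))
  rw [Matrix.mul_assoc Z, dotProduct_fromBlocks_mulVec_graph,
    sumElim_dotProduct_lmiSigma_mulVec A C E D hPt,
    lmiH_mul_lmiPhi_mulVec_dotProduct_lmiU_mulVec] at h
  have hzPz : z ⬝ᵥ P *ᵥ z = z ⬝ᵥ ((P * A - Rᵀ * C) *ᵥ x + (P * E - Rᵀ * D) *ᵥ y) +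
      z ⬝ᵥ P *ᵥ lpvGain G H φ *ᵥ x := by
    rw [hPz, dotProduct_add]
  linarith

end ObserverLMI

theorem stmt_15_general
    (n p q m n' : ℕ)
    (A : Matrix (Fin n) (Fin n) ℝ) (C : Matrix (Fin p) (Fin n) ℝ)
    (E : Matrix (Fin n) (Fin q) ℝ) (D : Matrix (Fin p) (Fin q) ℝ)
    (G : Matrix (Fin n) (Fin m) ℝ)
    (H : Fin m → Matrix (Fin n') (Fin n) ℝ)
    (fb : Fin m → Fin n' → ℝ)
    (μ : ℝ)
    (P : Matrix (Fin n) (Fin n) ℝ) (hP : P.PosDef)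
    (R : Matrix (Fin p) (Fin n) ℝ)
    (Z : Matrix ((Fin m × Fin n') × Fin n') ((Fin m × Fin n') × Fin n') ℝ) :
    -- the observer gain
    let L : Matrix (Fin n) (Fin p) ℝ := P⁻¹ * Rᵀ
    -- canonical matrices ℋ_ij = e_m(i) e_{n̄}(j)ᵀ
    let Hcal : Fin m → Fin n' → Matrix (Fin m) (Fin n') ℝ := fun i j =>
      Matrix.single i j (1 : ℝ)
    -- Σ, as a 3×3 block matrix with block sizes n, q, n
    let Sig : Matrix (Fin n ⊕ (Fin q ⊕ Fin n)) (Fin n ⊕ (Fin q ⊕ Fin n)) ℝ :=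
      Matrix.fromBlocks (1 - P) (Matrix.fromCols 0 (Aᵀ * P - Cᵀ * R))
        (Matrix.fromRows 0 (P * A - Rᵀ * C))
        (Matrix.fromBlocks (-(μ • (1 : Matrix (Fin q) (Fin q) ℝ)))
          (Eᵀ * P - Dᵀ * R) (P * E - Rᵀ * D) (-P))
    -- 𝕌, stacked over the pairs (i,j), with blocks [0 0 (P G ℋ_ij)ᵀ]
    let U : Matrix ((Fin m × Fin n') × Fin n') (Fin n ⊕ (Fin q ⊕ Fin n)) ℝ :=
      Matrix.of fun rI c =>
        Sum.elim (fun _ => (0 : ℝ)) (Sum.elim (fun _ => (0 : ℝ))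
          (fun l => (P * G * Hcal rI.1.1 rI.1.2)ᵀ rI.2 l)) c
    -- ℍ, block diagonal with diagonal blocks ℍ_i = [H_i 0 0]
    let Hb : Matrix ((Fin m × Fin n') × Fin n')
        ((Fin m × Fin n') × (Fin n ⊕ (Fin q ⊕ Fin n))) ℝ :=
      Matrix.of fun rI cI =>
        if rI.1 = cI.1 then
          Sum.elim (fun a => H rI.1.1 rI.2 a) (fun _ => (0 : ℝ)) cI.2
        else 0
    -- a stacked parameter matrix with blocks φ_ij • I
    let stackF : (Fin m → Fin n' → ℝ) →
        Matrix ((Fin m × Fin n') × (Fin n ⊕ (Fin q ⊕ Fin n)))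
          (Fin n ⊕ (Fin q ⊕ Fin n)) ℝ :=
      fun φ => Matrix.of fun rI c => if rI.2 = c then φ rI.1.1 rI.1.2 else 0
    -- the LMI: for every Φ ∈ 𝓕 the 2×2 block matrix is ≺ 0
    (∀ φ : Fin m → Fin n' → ℝ, (∀ i j, 0 ≤ φ i j ∧ φ i j ≤ fb i j) →
        (-(Matrix.fromBlocks Sig (U + Z * Hb * stackF φ)ᵀ
            (U + Z * Hb * stackF φ) (-((2 : ℝ) • Z)))).PosDef) →
      ∀ (f : Fin m → Fin n' → ℕ → ℝ) (ω : ℕ → Fin q → ℝ) (e : ℕ → Fin n → ℝ),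
        (∀ i j k, 0 ≤ f i j k ∧ f i j k ≤ fb i j) →
        (∀ k : ℕ, e (k + 1) =
          (A - L * C +
              ∑ i : Fin m, ∑ j : Fin n', f i j k • (G * Hcal i j * H i)).mulVec
            (e k) + (E - L * D).mulVec (ω k)) →
        ∀ N : ℕ,
          ∑ k ∈ Finset.range N, e k ⬝ᵥ e k ≤
            μ * ∑ k ∈ Finset.range N, ω k ⬝ᵥ ω k +
              (⨆ i, hP.isHermitian.eigenvalues i) * (e 0 ⬝ᵥ e 0) := by
  intro L Hcal Sig U Hb stackF hLMI f ω e hf hdyn N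
  have hstep : ∀ k, e k ⬝ᵥ e k + e (k + 1) ⬝ᵥ P *ᵥ e (k + 1) ≤
      μ * (ω k ⬝ᵥ ω k) + e k ⬝ᵥ P *ᵥ e k := fun k =>
    dissipation_step_of_lmi hP (hLMI _ fun i j => hf i j k) (e k) (ω k) (hdyn k)
  have hPe : 0 ≤ e N ⬝ᵥ P *ᵥ e N := by
    simpa using hP.posSemidef.dotProduct_mulVec_nonneg (e N)
  calc ∑ k ∈ Finset.range N, e k ⬝ᵥ e k
      ≤ ∑ k ∈ Finset.range N, μ * (ω k ⬝ᵥ ω k) + e 0 ⬝ᵥ P *ᵥ e 0 :=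
        Finset.sum_range_le_add_of_dissipation (V := fun k => e k ⬝ᵥ P *ᵥ e k) hstep N hPe
    _ ≤ _ := by
        rw [Finset.mul_sum]
        gcongr
        exact hP.isHermitian.dotProduct_mulVec_le_iSup_eigenvalues_mul (e 0)

/-- Corollary 2 of the paper (linear output, LPV-based LMI): if the 2×2 block
LMI holds (≺ 0) at every parameter matrix `Φ ∈ 𝓕`, the H∞ performance bound
follows for the observer error dynamics, with `L = P⁻¹Rᵀ`. -/
theorem stmt_15
    (n p q m n' : ℕ)
    (A : Matrix (Fin n) (Fin n) ℝ) (C : Matrix (Fin p) (Fin n) ℝ)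
    (E : Matrix (Fin n) (Fin q) ℝ) (D : Matrix (Fin p) (Fin q) ℝ)
    (G : Matrix (Fin n) (Fin m) ℝ)
    (H : Fin m → Matrix (Fin n') (Fin n) ℝ)
    (fb : Fin m → Fin n' → ℝ) (hfb : ∀ i j, 0 ≤ fb i j)
    (μ : ℝ) (hμ : 0 < μ)
    (P : Matrix (Fin n) (Fin n) ℝ) (hP : P.PosDef)
    (R : Matrix (Fin p) (Fin n) ℝ)
    (Z : Matrix ((Fin m × Fin n') × Fin n') ((Fin m × Fin n') × Fin n') ℝ)
    (hZ : Z.PosDef)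
    (hZdiag : ∀ ij : Fin m × Fin n',
      (Matrix.of fun k l => Z (ij, k) (ij, l)).PosDef)
    (hZoff : ∀ ij ij' : Fin m × Fin n', ij ≠ ij' →
      (Matrix.of fun k l => Z (ij, k) (ij', l)).PosSemidef) :
    -- the observer gain
    let L : Matrix (Fin n) (Fin p) ℝ := P⁻¹ * Rᵀ
    -- canonical matrices ℋ_ij = e_m(i) e_{n̄}(j)ᵀ
    let Hcal : Fin m → Fin n' → Matrix (Fin m) (Fin n') ℝ := fun i j =>
      Matrix.single i j (1 : ℝ)
    -- Σ, as a 3×3 block matrix with block sizes n, q, n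
    let Sig : Matrix (Fin n ⊕ (Fin q ⊕ Fin n)) (Fin n ⊕ (Fin q ⊕ Fin n)) ℝ :=
      Matrix.fromBlocks (1 - P) (Matrix.fromCols 0 (Aᵀ * P - Cᵀ * R))
        (Matrix.fromRows 0 (P * A - Rᵀ * C))
        (Matrix.fromBlocks (-(μ • (1 : Matrix (Fin q) (Fin q) ℝ)))
          (Eᵀ * P - Dᵀ * R) (P * E - Rᵀ * D) (-P))
    -- 𝕌, stacked over the pairs (i,j), with blocks [0 0 (P G ℋ_ij)ᵀ]
    let U : Matrix ((Fin m × Fin n') × Fin n') (Fin n ⊕ (Fin q ⊕ Fin n)) ℝ :=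
      Matrix.of fun rI c =>
        Sum.elim (fun _ => (0 : ℝ)) (Sum.elim (fun _ => (0 : ℝ))
          (fun l => (P * G * Hcal rI.1.1 rI.1.2)ᵀ rI.2 l)) c
    -- ℍ, block diagonal with diagonal blocks ℍ_i = [H_i 0 0]
    let Hb : Matrix ((Fin m × Fin n') × Fin n')
        ((Fin m × Fin n') × (Fin n ⊕ (Fin q ⊕ Fin n))) ℝ :=
      Matrix.of fun rI cI =>
        if rI.1 = cI.1 then
          Sum.elim (fun a => H rI.1.1 rI.2 a) (fun _ => (0 : ℝ)) cI.2
        else 0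
    -- a stacked parameter matrix with blocks φ_ij • I
    let stackF : (Fin m → Fin n' → ℝ) →
        Matrix ((Fin m × Fin n') × (Fin n ⊕ (Fin q ⊕ Fin n)))
          (Fin n ⊕ (Fin q ⊕ Fin n)) ℝ :=
      fun φ => Matrix.of fun rI c => if rI.2 = c then φ rI.1.1 rI.1.2 else 0
    -- the LMI: for every Φ ∈ 𝓕 the 2×2 block matrix is ≺ 0
    (∀ φ : Fin m → Fin n' → ℝ, (∀ i j, 0 ≤ φ i j ∧ φ i j ≤ fb i j) →
        (-(Matrix.fromBlocks Sig (U + Z * Hb * stackF φ)ᵀ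
            (U + Z * Hb * stackF φ) (-((2 : ℝ) • Z)))).PosDef) →
      ∀ (f : Fin m → Fin n' → ℕ → ℝ) (ω : ℕ → Fin q → ℝ) (e : ℕ → Fin n → ℝ),
        (∀ i j k, 0 ≤ f i j k ∧ f i j k ≤ fb i j) →
        (∀ k : ℕ, e (k + 1) =
          (A - L * C +
              ∑ i : Fin m, ∑ j : Fin n', f i j k • (G * Hcal i j * H i)).mulVec
            (e k) + (E - L * D).mulVec (ω k)) →
        ∀ N : ℕ,
          ∑ k ∈ Finset.range N, e k ⬝ᵥ e k ≤
            μ * ∑ k ∈ Finset.range N, ω k ⬝ᵥ ω k +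
              (⨆ i, hP.isHermitian.eigenvalues i) * (e 0 ⬝ᵥ e 0) :=
  stmt_15_general n p q m n' A C E D G H fb μ P hP R Z
end
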